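/- arXiv:2206.01132 — 4 statements merged into one kernel-verified Lean document; each statement's English description precedes it below -/
import Mathlib

section
/- Consider m agents with differentiable local objectives f_i, local gradient-descent operators D_i¹(x,y) = x - η_x ∇_x f_i(x,y) and gradient-ascent operators A_i¹(x,y) = y + η_y ∇_y f_i(x,y), with k-fold compositions D_i^k, A_i^k (and D_i⁰(x,y)=x, A_i⁰(x,y)=y). Define the iteration x^{t+1} = (1/m)∑_i D_i^K(x^t, y^t), y^{t+1} = (1/m)∑_i A_i^K(x^t,y^t). If the sequence (x^t, y^t) converges to (x*, y*), then (1/m) ∑_{i=1}^m ∑_{k=0}^{K-1} ∇ f_i(D_i^k(x*,y*), A_i^k(x*,y*)) = 0, where ∇f_i = (∇_x f_i, ∇_y f_i). -/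
/-!
Each local step has the form `w ↦ w + d w`, so `K` local steps from `w` telescope to
`w + ∑_{k<K} d(stepᵏ w)`, and the averaged round is `w ↦ w + (1/m) ∑ᵢ ∑_{k<K} dᵢ(stepᵢᵏ w)`.
This round map is continuous, so the limit of its orbit is a fixed point, i.e. the averaged
increment vanishes there; its two components are `-ηx` and `ηy` times the two claimed sums.
-/

open Finset Filter Topology

theorem Function.iterate_apply_eq_add_sum {E : Type*} [AddCommMonoid E] {g d : E → E}
    (hg : ∀ w, g w = w + d w) (w : E) (k : ℕ) :
    g^[k] w = w + ∑ j ∈ range k, d (g^[j] w) := by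
  induction k with
  | zero => simp
  | succ k ih => rw [Function.iterate_succ_apply', sum_range_succ, ← add_assoc, ← ih, hg]

theorem inv_card_smul_sum_add_eq_self_iff {ι 𝕜 E : Type*} [Fintype ι] [Nonempty ι]
    [DivisionRing 𝕜] [CharZero 𝕜] [AddCommGroup E] [Module 𝕜 E] (w : E) (v : ι → E) :
    (Fintype.card ι : 𝕜)⁻¹ • ∑ i, (w + v i) = w ↔ (Fintype.card ι : 𝕜)⁻¹ • ∑ i, v i = 0 := by
  have hcard : (Fintype.card ι : 𝕜) ≠ 0 := Nat.cast_ne_zero.mpr Fintype.card_ne_zero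
  rw [sum_add_distrib, sum_const, card_univ, ← Nat.cast_smul_eq_nsmul 𝕜, smul_add,
    inv_smul_smul₀ hcard, add_eq_left]

theorem isFixedPt_of_tendsto_of_apply_succ {X : Type*} [TopologicalSpace X] [T2Space X]
    {F : X → X} {z : ℕ → X} {x : X} (hF : ContinuousAt F x) (hz : ∀ t, z (t + 1) = F (z t))
    (hlim : Tendsto z atTop (𝓝 x)) : Function.IsFixedPt F x :=
  tendsto_nhds_unique ((hF.tendsto.comp hlim).congr fun t => (hz t).symm)
    (hlim.comp (tendsto_add_atTop_nat 1))

theorem stmt8_general {p q : ℕ} (m K : ℕ) (hm : 0 < m)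
    (ηx ηy : ℝ) (hηx : 0 < ηx) (hηy : 0 < ηy)
    (gx : Fin m → EuclideanSpace ℝ (Fin p) × EuclideanSpace ℝ (Fin q) → EuclideanSpace ℝ (Fin p))
    (gy : Fin m → EuclideanSpace ℝ (Fin p) × EuclideanSpace ℝ (Fin q) → EuclideanSpace ℝ (Fin q))
    (hgxc : ∀ i, Continuous (gx i)) (hgyc : ∀ i, Continuous (gy i))
    (step : Fin m → EuclideanSpace ℝ (Fin p) × EuclideanSpace ℝ (Fin q) →
      EuclideanSpace ℝ (Fin p) × EuclideanSpace ℝ (Fin q))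
    (hstep : ∀ i z, step i z = (z.1 - ηx • gx i z, z.2 + ηy • gy i z))
    (z : ℕ → EuclideanSpace ℝ (Fin p) × EuclideanSpace ℝ (Fin q))
    (hz : ∀ t, z (t + 1) =
      ((m : ℝ)⁻¹ • ∑ i, ((step i)^[K] (z t)).1, (m : ℝ)⁻¹ • ∑ i, ((step i)^[K] (z t)).2))
    (zs : EuclideanSpace ℝ (Fin p) × EuclideanSpace ℝ (Fin q))
    (hlim : Filter.Tendsto z Filter.atTop (nhds zs)) :
    (m : ℝ)⁻¹ • ∑ i, ∑ k ∈ Finset.range K, gx i ((step i)^[k] zs) = 0 ∧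
      (m : ℝ)⁻¹ • ∑ i, ∑ k ∈ Finset.range K, gy i ((step i)^[k] zs) = 0 := by
  have : Nonempty (Fin m) := Fin.pos_iff_nonempty.mp hm
  set d := fun i w => (-(ηx • gx i w), ηy • gy i w)
  have hstep_add : ∀ i w, step i w = w + d i w := fun i w => by
    rw [hstep]; exact Prod.ext (sub_eq_add_neg _ _) rfl
  have hstep_cont : ∀ i, Continuous (step i) := fun i => by
    rw [funext (hstep i)]
    exact (continuous_fst.sub ((hgxc i).const_smul ηx)).prodMk
      (continuous_snd.add ((hgyc i).const_smul ηy))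
  have hfix : (m : ℝ)⁻¹ • ∑ i, (step i)^[K] zs = zs := by
    refine isFixedPt_of_tendsto_of_apply_succ (F := fun w => (m : ℝ)⁻¹ • ∑ i, (step i)^[K] w)
      ?_ (fun t => ?_) hlim
    · exact ((continuous_finsetSum _ fun i _ =>
        (hstep_cont i).iterate K).const_smul (m : ℝ)⁻¹).continuousAt
    · rw [hz t]; ext <;> simp [Prod.fst_sum, Prod.snd_sum]
  rw [sum_congr rfl fun i _ => Function.iterate_apply_eq_add_sum (hstep_add i) zs K] at hfix
  have hmean := (inv_card_smul_sum_add_eq_self_iff (𝕜 := ℝ) (ι := Fin m) zs _).mp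
    (by rwa [Fintype.card_fin])
  rw [Fintype.card_fin] at hmean
  constructor
  · have hmean_x := congrArg Prod.fst hmean
    simp only [d, Prod.smul_fst, Prod.fst_sum, Prod.fst_zero, sum_neg_distrib, ← smul_sum,
      smul_neg, neg_eq_zero, smul_comm (m : ℝ)⁻¹ ηx] at hmean_x
    exact (smul_eq_zero.mp hmean_x).resolve_left hηx.ne'
  · have hmean_y := congrArg Prod.snd hmean
    simp only [d, Prod.smul_snd, Prod.snd_sum, Prod.snd_zero, ← smul_sum,
      smul_comm (m : ℝ)⁻¹ ηy] at hmean_y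
    exact (smul_eq_zero.mp hmean_y).resolve_left hηy.ne'

/-- Fixed points of Local SGDA with full gradients: if the averaged `K`-step local GDA
iteration converges to `(x*, y*)`, then
`(1/m) ∑ᵢ ∑_{k=0}^{K-1} ∇ fᵢ(Dᵢᵏ(x*, y*), Aᵢᵏ(x*, y*)) = 0`. -/
theorem stmt8 {p q : ℕ} (m K : ℕ) (hm : 0 < m) (hK : 1 ≤ K)
    (ηx ηy : ℝ) (hηx : 0 < ηx) (hηy : 0 < ηy)
    (f : Fin m → EuclideanSpace ℝ (Fin p) × EuclideanSpace ℝ (Fin q) → ℝ)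
    (hf : ∀ i, Differentiable ℝ (f i))
    (gx : Fin m → EuclideanSpace ℝ (Fin p) × EuclideanSpace ℝ (Fin q) → EuclideanSpace ℝ (Fin p))
    (gy : Fin m → EuclideanSpace ℝ (Fin p) × EuclideanSpace ℝ (Fin q) → EuclideanSpace ℝ (Fin q))
    (hgx : ∀ i x y, gx i (x, y) = gradient (fun u => f i (u, y)) x)
    (hgy : ∀ i x y, gy i (x, y) = gradient (fun v => f i (x, v)) y)
    (hgxc : ∀ i, Continuous (gx i)) (hgyc : ∀ i, Continuous (gy i))
    (step : Fin m → EuclideanSpace ℝ (Fin p) × EuclideanSpace ℝ (Fin q) →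
      EuclideanSpace ℝ (Fin p) × EuclideanSpace ℝ (Fin q))
    (hstep : ∀ i z, step i z = (z.1 - ηx • gx i z, z.2 + ηy • gy i z))
    (z : ℕ → EuclideanSpace ℝ (Fin p) × EuclideanSpace ℝ (Fin q))
    (hz : ∀ t, z (t + 1) =
      ((m : ℝ)⁻¹ • ∑ i, ((step i)^[K] (z t)).1, (m : ℝ)⁻¹ • ∑ i, ((step i)^[K] (z t)).2))
    (zs : EuclideanSpace ℝ (Fin p) × EuclideanSpace ℝ (Fin q))
    (hlim : Filter.Tendsto z Filter.atTop (nhds zs)) :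
    (m : ℝ)⁻¹ • ∑ i, ∑ k ∈ Finset.range K, gx i ((step i)^[k] zs) = 0 ∧
      (m : ℝ)⁻¹ • ∑ i, ∑ k ∈ Finset.range K, gy i ((step i)^[k] zs) = 0 :=
  stmt8_general m K hm ηx ηy hηx hηy gx gy hgxc hgyc step hstep z hz zs hlim
end

section
/- Suppose each f_i : R^p × R^q → R (i = 1,…,m) is twice differentiable, μ-strongly-convex-strongly-concave, and L-smooth (gradients L-Lipschitz), and that the average f = (1/m)∑ f_i has a minimax point (x*, y*) in a compact convex set X × Y. Then the iterates of FedGDA-GT with K local steps and constant step size η satisfy ‖x^t - x*‖² + ‖y^t - y*‖² ≤ ρ(η)^t (‖x^0 - x*‖² + ‖y^0 - y*‖²) for all t, where ρ(η) = 1 - 2(ημK - 2η²L²K² - η⁴L⁴K⁴), for any η > 0 small enough that ρ(η) ∈ (0,1). -/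
/-!
Write `F = (1/m) ∑ Fᵢ` for the saddle operator `(∇ₓ f, -∇_y f)` on the ℓ² product, so that
`F` is `μ`-strongly monotone, `L`-Lipschitz and vanishes at `z* = (x*, y*)`. In a round started
at `z`, the gradient-tracking correction makes every local step move by `-η F z` up to
`η (Fᵢ wᵢ,ₖ - Fᵢ z)`, so the local iterates drift from `z` by at most `2kη‖F z‖` as long as
`2ηLK ≤ 1`. Summing, the averaged iterate is `z - ηK F z` up to an error of norm at most
`η²L²K² ‖z - z*‖`. The exact step `z - ηK F z` contracts `‖z - z*‖²` by the factor
`1 - 2ηKμ + η²K²L²`, the error adds at most `2ε + ε²` with `ε = η²L²K²`, and projecting onto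
the convex set `X × Y ∋ z*` does not increase the distance to `z*`.
-/

open scoped RealInnerProductSpace
open Finset

lemma sum_range_natCast_le_sq_div_two (n : ℕ) : ∑ k ∈ range n, (k : ℝ) ≤ n ^ 2 / 2 := by
  induction n with
  | zero => simp
  | succ n ih =>
    rw [sum_range_succ]
    push_cast
    nlinarith

lemma sq_add_le_of_sq_le {a b c ε D : ℝ} (ha : 0 ≤ a) (hb : 0 ≤ b) (hD : 0 ≤ D) (hc : c ≤ 1)
    (ha2 : a ^ 2 ≤ c * D ^ 2) (hbD : b ≤ ε * D) :
    (a + b) ^ 2 ≤ (c + 2 * ε + ε ^ 2) * D ^ 2 := by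
  have haD : a ≤ D := pow_le_pow_iff_left₀ ha hD two_ne_zero |>.1 (by nlinarith)
  nlinarith [mul_le_mul haD hbD hb hD, mul_le_mul hbD hbD hb (hb.trans hbD)]

lemma stepSize_bounds {μ L η : ℝ} {K : ℕ} (hη : 0 < η) (hμL : μ ≤ L)
    (hgap : 0 < η * μ * K - 2 * η ^ 2 * L ^ 2 * K ^ 2 - η ^ 4 * L ^ 4 * K ^ 4) :
    0 ≤ L ∧ 2 * η * L * K ≤ 1 ∧ η ^ 2 * L ^ 2 * K ^ 2 ≤ 2 * η * μ * K := by
  have hηK : 0 ≤ η * K := by positivity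
  have h4 : 0 ≤ η ^ 4 * L ^ 4 * K ^ 4 := by positivity
  have hμ : 2 * η * L ^ 2 * K < μ := by
    by_contra! h
    nlinarith [mul_le_mul_of_nonneg_left h hηK]
  have hL : 0 < L := by nlinarith [mul_nonneg (mul_nonneg hηK (sq_nonneg L)) zero_le_two]
  refine ⟨hL.le, ?_, ?_⟩
  · nlinarith
  · nlinarith [sq_nonneg (η * L * K)]

section InnerProductSpace

variable {E : Type*} [NormedAddCommGroup E] [InnerProductSpace ℝ E]

-- One agent's local run in a FedGDA-GT round started at `z`; `g` stands for `F z`.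
structure IsLocalSteps (G : E → E) (η : ℝ) (z g : E) (u : ℕ → E) : Prop where
  zero : u 0 = z
  succ : ∀ k, u (k + 1) = u k - η • (G (u k) - G z + g)

lemma Convex.norm_sub_sq_le_of_forall_norm_sub_le {X : Set E} (hX : Convex ℝ X) {w p c : E}
    (hp : p ∈ X) (hmin : ∀ u ∈ X, ‖p - w‖ ≤ ‖u - w‖) (hc : c ∈ X) :
    ‖p - c‖ ^ 2 ≤ ‖w - c‖ ^ 2 := by
  have : Nonempty X := ⟨⟨c, hc⟩⟩
  have hinf : ‖w - p‖ = ⨅ u : X, ‖w - u‖ := by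
    refine le_antisymm (le_ciInf fun u => ?_) (ciInf_le (f := fun u : X => ‖w - u‖) ⟨0, ?_⟩ ⟨p, hp⟩)
    · simpa only [norm_sub_rev w] using hmin u u.2
    · rintro _ ⟨u, rfl⟩
      exact norm_nonneg _
  have hobtuse : ⟪w - p, c - p⟫ ≤ 0 := (norm_eq_iInf_iff_real_inner_le_zero hX hp).1 hinf c hc
  have hsplit : ‖w - c‖ ^ 2 = ‖w - p‖ ^ 2 - 2 * ⟪w - p, c - p⟫ + ‖c - p‖ ^ 2 := by
    rw [← norm_sub_sq_real, sub_sub_sub_cancel_right]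
  rw [norm_sub_rev p, hsplit]
  nlinarith [sq_nonneg ‖w - p‖]

lemma norm_sub_smul_sq_le {d g : E} {μ L s : ℝ} (hs : 0 ≤ s) (hmono : μ * ‖d‖ ^ 2 ≤ ⟪g, d⟫)
    (hlip : ‖g‖ ≤ L * ‖d‖) :
    ‖d - s • g‖ ^ 2 ≤ (1 - 2 * s * μ + s ^ 2 * L ^ 2) * ‖d‖ ^ 2 := by
  have hg2 : ‖g‖ ^ 2 ≤ L ^ 2 * ‖d‖ ^ 2 := by
    rw [← mul_pow]; exact pow_le_pow_left₀ (norm_nonneg g) hlip 2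
  rw [norm_sub_sq_real, inner_smul_right, norm_smul, Real.norm_of_nonneg hs, real_inner_comm]
  nlinarith [mul_le_mul_of_nonneg_left hmono hs, mul_le_mul_of_nonneg_left hg2 (sq_nonneg s)]

lemma norm_inv_smul_sum_le {m : ℕ} (hm : 0 < m) {v : Fin m → E} {C : ℝ} (h : ∀ i, ‖v i‖ ≤ C) :
    ‖(m : ℝ)⁻¹ • ∑ i, v i‖ ≤ C := by
  have hsum : ∑ i, ‖v i‖ ≤ m * C := by
    simpa using sum_le_card_nsmul univ (fun i => ‖v i‖) C fun i _ => h i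
  rw [norm_smul, Real.norm_of_nonneg (by positivity), inv_mul_le_iff₀ (by positivity)]
  exact (norm_sum_le _ _).trans hsum

lemma le_inner_inv_smul_sum {m : ℕ} (hm : 0 < m) {v : Fin m → E} {d : E} {C : ℝ}
    (h : ∀ i, C ≤ ⟪v i, d⟫) : C ≤ ⟪(m : ℝ)⁻¹ • ∑ i, v i, d⟫ := by
  have hsum : m * C ≤ ∑ i, ⟪v i, d⟫ := by
    simpa using card_nsmul_le_sum univ (fun i => ⟪v i, d⟫) C fun i _ => h i
  rw [inner_smul_left, sum_inner, RCLike.conj_to_real, le_inv_mul_iff₀ (by positivity)]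
  exact hsum

namespace IsLocalSteps

variable {G : E → E} {η L : ℝ} {z g : E} {u : ℕ → E}

lemma eq_sub_smul_sub_smul_sum (hu : IsLocalSteps G η z g u) (n : ℕ) :
    u n = z - (η * n) • g - η • ∑ k ∈ range n, (G (u k) - G z) := by
  induction n with
  | zero => simp [hu.zero]
  | succ n ih =>
    rw [hu.succ, sum_range_succ, ih]
    push_cast
    module

lemma norm_sub_le (hu : IsLocalSteps G η z g u) (hη : 0 ≤ η) (hL : 0 ≤ L)
    (hG : ∀ v v', ‖G v - G v'‖ ≤ L * ‖v - v'‖) {K : ℕ} (hK : 2 * η * L * K ≤ 1) :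
    ∀ k ≤ K, ‖u k - z‖ ≤ 2 * k * η * ‖g‖ := by
  intro k
  induction k with
  | zero => simp [hu.zero]
  | succ k ih =>
    intro hk
    replace ih := ih (Nat.le_of_succ_le hk)
    have hkK : (k : ℝ) ≤ K := by exact_mod_cast Nat.le_of_succ_le hk
    have hstep : u (k + 1) - z = (u k - z) - η • (G (u k) - G z) - η • g := by
      rw [hu.succ]; module
    have hsmall : 2 * k * η * L ≤ 1 := by nlinarith [mul_nonneg hη hL]
    calc ‖u (k + 1) - z‖ ≤ ‖u k - z‖ + η * ‖G (u k) - G z‖ + η * ‖g‖ := by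
          rw [hstep]
          refine (_root_.norm_sub_le _ _).trans
            (add_le_add ((_root_.norm_sub_le _ _).trans ?_) ?_) <;>
            simp [norm_smul, Real.norm_of_nonneg hη]
      _ ≤ 2 * k * η * ‖g‖ + η * (L * (2 * k * η * ‖g‖)) + η * ‖g‖ := by
          gcongr
          exact (hG _ _).trans (by gcongr)
      _ ≤ 2 * (k + 1 : ℕ) * η * ‖g‖ := by
          push_cast
          nlinarith [mul_le_mul_of_nonneg_right hsmall (mul_nonneg hη (norm_nonneg g))]

lemma norm_sum_sub_le (hu : IsLocalSteps G η z g u) (hη : 0 ≤ η) (hL : 0 ≤ L)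
    (hG : ∀ v v', ‖G v - G v'‖ ≤ L * ‖v - v'‖) {K : ℕ} (hK : 2 * η * L * K ≤ 1) :
    ‖∑ k ∈ range K, (G (u k) - G z)‖ ≤ η * L * K ^ 2 * ‖g‖ :=
  calc ‖∑ k ∈ range K, (G (u k) - G z)‖ ≤ ∑ k ∈ range K, L * (2 * k * η * ‖g‖) := by
        refine (norm_sum_le _ _).trans (sum_le_sum fun k hk => (hG _ _).trans ?_)
        exact mul_le_mul_of_nonneg_left (hu.norm_sub_le hη hL hG hK k (mem_range.1 hk).le) hL
    _ = 2 * η * L * ‖g‖ * ∑ k ∈ range K, (k : ℝ) := by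
        rw [mul_sum]; exact sum_congr rfl fun k _ => by ring
    _ ≤ 2 * η * L * ‖g‖ * (K ^ 2 / 2) := by
        gcongr
        exact sum_range_natCast_le_sq_div_two K
    _ = η * L * K ^ 2 * ‖g‖ := by ring

end IsLocalSteps

theorem norm_inv_smul_sum_localSteps_sub_sq_le {m K : ℕ} (hm : 0 < m) {μ L η : ℝ} (hη : 0 < η)
    (hμL : μ ≤ L) (hgap : 0 < η * μ * K - 2 * η ^ 2 * L ^ 2 * K ^ 2 - η ^ 4 * L ^ 4 * K ^ 4)
    {F : Fin m → E → E} (hmono : ∀ i v v', μ * ‖v - v'‖ ^ 2 ≤ ⟪F i v - F i v', v - v'⟫)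
    (hlip : ∀ i v v', ‖F i v - F i v'‖ ≤ L * ‖v - v'‖)
    {zs : E} (hzs : (m : ℝ)⁻¹ • ∑ i, F i zs = 0) {z : E} {u : Fin m → ℕ → E}
    (hu : ∀ i, IsLocalSteps (F i) η z ((m : ℝ)⁻¹ • ∑ j, F j z) (u i)) :
    ‖(m : ℝ)⁻¹ • ∑ i, u i K - zs‖ ^ 2 ≤
      (1 - 2 * (η * μ * K - 2 * η ^ 2 * L ^ 2 * K ^ 2 - η ^ 4 * L ^ 4 * K ^ 4)) * ‖z - zs‖ ^ 2 := by
  obtain ⟨hL, hK, hc⟩ := stepSize_bounds hη hμL hgap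
  set g := (m : ℝ)⁻¹ • ∑ j, F j z
  set D := ‖z - zs‖
  have hg_sub : g = (m : ℝ)⁻¹ • ∑ j, (F j z - F j zs) := by
    rw [sum_sub_distrib, smul_sub, hzs, sub_zero]
  have hg_norm : ‖g‖ ≤ L * D := hg_sub ▸ norm_inv_smul_sum_le hm fun j => hlip j z zs
  have hg_inner : μ * D ^ 2 ≤ ⟪g, z - zs⟫ :=
    hg_sub ▸ le_inner_inv_smul_sum hm fun j => hmono j z zs
  set e := (m : ℝ)⁻¹ • ∑ i, ∑ k ∈ range K, (F i (u i k) - F i z)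
  have havg : (m : ℝ)⁻¹ • ∑ i, u i K - zs = (z - zs - (η * K) • g) - η • e := by
    have hm0 : (m : ℝ) ≠ 0 := by positivity
    rw [sum_congr rfl fun i _ => (hu i).eq_sub_smul_sub_smul_sum K, sum_sub_distrib, sum_const,
      card_univ, Fintype.card_fin, ← smul_sum, smul_sub, smul_comm _ η, ← Nat.cast_smul_eq_nsmul ℝ,
      smul_smul, inv_mul_cancel₀ hm0, one_smul]
    abel
  have he : ‖η • e‖ ≤ η ^ 2 * L ^ 2 * K ^ 2 * D := by
    have : ‖e‖ ≤ η * L * K ^ 2 * ‖g‖ :=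
      norm_inv_smul_sum_le hm fun i => (hu i).norm_sum_sub_le hη.le hL (hlip i) hK
    rw [norm_smul, Real.norm_of_nonneg hη.le]
    calc η * ‖e‖ ≤ η * (η * L * K ^ 2 * (L * D)) := by gcongr; exact this.trans (by gcongr)
      _ = η ^ 2 * L ^ 2 * K ^ 2 * D := by ring
  rw [havg]
  calc ‖z - zs - (η * K) • g - η • e‖ ^ 2 ≤ (‖z - zs - (η * K) • g‖ + ‖η • e‖) ^ 2 :=
        pow_le_pow_left₀ (norm_nonneg _) (_root_.norm_sub_le _ _) 2
    _ ≤ (1 - 2 * (η * K) * μ + (η * K) ^ 2 * L ^ 2 + 2 * (η ^ 2 * L ^ 2 * K ^ 2)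
          + (η ^ 2 * L ^ 2 * K ^ 2) ^ 2) * D ^ 2 :=
        sq_add_le_of_sq_le (norm_nonneg _) (norm_nonneg _) (norm_nonneg _) (by nlinarith)
          (norm_sub_smul_sq_le (by positivity) hg_inner hg_norm) he
    _ ≤ _ := by gcongr; nlinarith [sq_nonneg (η ^ 2 * L ^ 2 * K ^ 2), sq_nonneg (η * L * K)]

end InnerProductSpace

section Saddle

variable {α β : Type*} [NormedAddCommGroup α] [NormedAddCommGroup β]

-- On the ℓ² product, `μ`-strong convexity-concavity of `f` is `μ`-strong monotonicity of
-- this operator.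
def saddleOperator (gx : α × β → α) (gy : α × β → β) (v : WithLp 2 (α × β)) :
    WithLp 2 (α × β) :=
  WithLp.toLp 2 (gx v.ofLp, -gy v.ofLp)

lemma norm_toLp_sq (x : α × β) : ‖WithLp.toLp 2 x‖ ^ 2 = ‖x.1‖ ^ 2 + ‖x.2‖ ^ 2 :=
  WithLp.prod_norm_sq_eq_of_L2 _

lemma saddleOperator_sub (gx : α × β → α) (gy : α × β → β) (v v' : WithLp 2 (α × β)) :
    saddleOperator gx gy v - saddleOperator gx gy v' =
      WithLp.toLp 2 (gx v.ofLp - gx v'.ofLp, -(gy v.ofLp - gy v'.ofLp)) := by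
  rw [saddleOperator, saddleOperator, ← WithLp.toLp_sub, Prod.mk_sub_mk, neg_sub_neg, neg_sub]

lemma saddleOperator_lipschitz {gx : α × β → α} {gy : α × β → β} {L : ℝ} (hL : 0 ≤ L)
    (h : ∀ z z' : α × β, ‖gx z - gx z'‖ ^ 2 + ‖gy z - gy z'‖ ^ 2 ≤
      L ^ 2 * (‖z.1 - z'.1‖ ^ 2 + ‖z.2 - z'.2‖ ^ 2))
    (v v' : WithLp 2 (α × β)) :
    ‖saddleOperator gx gy v - saddleOperator gx gy v'‖ ≤ L * ‖v - v'‖ := by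
  refine le_of_pow_le_pow_left₀ two_ne_zero (by positivity) ?_
  rw [mul_pow, saddleOperator_sub, ← WithLp.toLp_ofLp 2 (v - v'), norm_toLp_sq, norm_toLp_sq]
  simpa only [WithLp.ofLp_sub, Prod.fst_sub, Prod.snd_sub, norm_neg] using h v.ofLp v'.ofLp

variable [InnerProductSpace ℝ α] [InnerProductSpace ℝ β]

lemma saddleOperator_strongMono {gx : α × β → α} {gy : α × β → β} {μ : ℝ}
    (h : ∀ z z' : α × β, μ * (‖z.1 - z'.1‖ ^ 2 + ‖z.2 - z'.2‖ ^ 2) ≤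
      ⟪gx z - gx z', z.1 - z'.1⟫ - ⟪gy z - gy z', z.2 - z'.2⟫)
    (v v' : WithLp 2 (α × β)) :
    μ * ‖v - v'‖ ^ 2 ≤ ⟪saddleOperator gx gy v - saddleOperator gx gy v', v - v'⟫ := by
  rw [saddleOperator_sub, ← WithLp.toLp_ofLp 2 (v - v'), norm_toLp_sq, WithLp.prod_inner_apply]
  simpa only [WithLp.ofLp_toLp, WithLp.ofLp_sub, Prod.fst_sub, Prod.snd_sub, inner_neg_left,
    ← sub_eq_add_neg] using h v.ofLp v'.ofLp

theorem fedGDAGT_round_sq_dist_le {m K : ℕ} (hm : 0 < m) {μ L η : ℝ} (hη : 0 < η)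
    (hμL : μ ≤ L) (hgap : 0 < η * μ * K - 2 * η ^ 2 * L ^ 2 * K ^ 2 - η ^ 4 * L ^ 4 * K ^ 4)
    {gx : Fin m → α × β → α} {gy : Fin m → α × β → β}
    (hmono : ∀ i (z z' : α × β), μ * (‖z.1 - z'.1‖ ^ 2 + ‖z.2 - z'.2‖ ^ 2) ≤
      ⟪gx i z - gx i z', z.1 - z'.1⟫ - ⟪gy i z - gy i z', z.2 - z'.2⟫)
    (hlip : ∀ i (z z' : α × β), ‖gx i z - gx i z'‖ ^ 2 + ‖gy i z - gy i z'‖ ^ 2 ≤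
      L ^ 2 * (‖z.1 - z'.1‖ ^ 2 + ‖z.2 - z'.2‖ ^ 2))
    {xs : α} {ys : β} (hstat1 : (m : ℝ)⁻¹ • ∑ i, gx i (xs, ys) = 0)
    (hstat2 : (m : ℝ)⁻¹ • ∑ i, gy i (xs, ys) = 0)
    {z : α × β} {w : Fin m → ℕ → α × β} (hw0 : ∀ i, w i 0 = z)
    (hwx : ∀ i k, (w i (k + 1)).1 = (w i k).1 -
        η • (gx i (w i k) - gx i z + (m : ℝ)⁻¹ • ∑ j, gx j z))
    (hwy : ∀ i k, (w i (k + 1)).2 = (w i k).2 +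
        η • (gy i (w i k) - gy i z + (m : ℝ)⁻¹ • ∑ j, gy j z)) :
    ‖(m : ℝ)⁻¹ • ∑ i, (w i K).1 - xs‖ ^ 2 + ‖(m : ℝ)⁻¹ • ∑ i, (w i K).2 - ys‖ ^ 2 ≤
      (1 - 2 * (η * μ * K - 2 * η ^ 2 * L ^ 2 * K ^ 2 - η ^ 4 * L ^ 4 * K ^ 4)) *
        (‖z.1 - xs‖ ^ 2 + ‖z.2 - ys‖ ^ 2) := by
  let F i := saddleOperator (gx i) (gy i)
  have hF (a : α × β) : (m : ℝ)⁻¹ • ∑ j, F j (WithLp.toLp 2 a) =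
      WithLp.toLp 2 ((m : ℝ)⁻¹ • ∑ j, gx j a, -((m : ℝ)⁻¹ • ∑ j, gy j a)) := by
    simp only [F, saddleOperator]
    rw [← WithLp.toLp_sum, ← WithLp.toLp_smul]
    congr 1
    ext <;> simp [Prod.fst_sum, Prod.snd_sum, sum_neg_distrib]
  have hu : ∀ i, IsLocalSteps (F i) η (WithLp.toLp 2 z) ((m : ℝ)⁻¹ • ∑ j, F j (WithLp.toLp 2 z))
      (fun k => WithLp.toLp 2 (w i k)) := by
    refine fun i => ⟨congrArg _ (hw0 i), fun k => ?_⟩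
    rw [hF]
    simp only [F, saddleOperator]
    rw [← WithLp.toLp_sub, ← WithLp.toLp_add, ← WithLp.toLp_smul, ← WithLp.toLp_sub]
    congr 1
    ext
    · simp [hwx]
    · simp only [hwy, Prod.snd_sub, Prod.smul_snd, Prod.snd_add]
      module
  have key := norm_inv_smul_sum_localSteps_sub_sq_le (F := F) (zs := WithLp.toLp 2 (xs, ys))
    hm hη hμL hgap (fun i => saddleOperator_strongMono (hmono i))
    (fun i => saddleOperator_lipschitz (stepSize_bounds hη hμL hgap).1 (hlip i))
    (by rw [hF, hstat1, hstat2, neg_zero]; rfl) hu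
  rw [← WithLp.toLp_sum, ← WithLp.toLp_smul, ← WithLp.toLp_sub, ← WithLp.toLp_sub, norm_toLp_sq,
    norm_toLp_sq] at key
  simpa only [Prod.fst_sub, Prod.snd_sub, Prod.smul_fst, Prod.smul_snd, Prod.fst_sum,
    Prod.snd_sum] using key

end Saddle

theorem stmt10_general {p q : ℕ} (m K : ℕ) (hm : 0 < m)
    (μ L : ℝ) (hμL : μ ≤ L)
    (gx : Fin m → EuclideanSpace ℝ (Fin p) × EuclideanSpace ℝ (Fin q) → EuclideanSpace ℝ (Fin p))
    (gy : Fin m → EuclideanSpace ℝ (Fin p) × EuclideanSpace ℝ (Fin q) → EuclideanSpace ℝ (Fin q))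
    -- μ-strong monotonicity of each (∇ₓ fᵢ, -∇_y fᵢ) (from μ-strong convexity-concavity)
    (hmono : ∀ i (z z' : EuclideanSpace ℝ (Fin p) × EuclideanSpace ℝ (Fin q)),
      μ * (‖z.1 - z'.1‖ ^ 2 + ‖z.2 - z'.2‖ ^ 2) ≤
        (inner ℝ (gx i z - gx i z') (z.1 - z'.1) : ℝ) - (inner ℝ (gy i z - gy i z') (z.2 - z'.2) : ℝ))
    -- L-smoothness of each fᵢ
    (hlip : ∀ i (z z' : EuclideanSpace ℝ (Fin p) × EuclideanSpace ℝ (Fin q)),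
      ‖gx i z - gx i z'‖ ^ 2 + ‖gy i z - gy i z'‖ ^ 2 ≤
        L ^ 2 * (‖z.1 - z'.1‖ ^ 2 + ‖z.2 - z'.2‖ ^ 2))
    (X : Set (EuclideanSpace ℝ (Fin p))) (Y : Set (EuclideanSpace ℝ (Fin q)))
    (hXconv : Convex ℝ X)
    (hYconv : Convex ℝ Y)
    (projX : EuclideanSpace ℝ (Fin p) → EuclideanSpace ℝ (Fin p))
    (projY : EuclideanSpace ℝ (Fin q) → EuclideanSpace ℝ (Fin q))
    (hprojX : ∀ w, projX w ∈ X ∧ ∀ u ∈ X, ‖projX w - w‖ ≤ ‖u - w‖)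
    (hprojY : ∀ w, projY w ∈ Y ∧ ∀ u ∈ Y, ‖projY w - w‖ ≤ ‖u - w‖)
    -- the minimax point of the average objective, lying in X × Y
    (xs : EuclideanSpace ℝ (Fin p)) (ys : EuclideanSpace ℝ (Fin q))
    (hxsX : xs ∈ X) (hysY : ys ∈ Y)
    (hstat1 : (m : ℝ)⁻¹ • ∑ i, gx i (xs, ys) = 0)
    (hstat2 : (m : ℝ)⁻¹ • ∑ i, gy i (xs, ys) = 0)
    (η : ℝ) (hη : 0 < η)
    (hρ : 1 - 2 * (η * μ * K - 2 * η ^ 2 * L ^ 2 * (K : ℝ) ^ 2 - η ^ 4 * L ^ 4 * (K : ℝ) ^ 4)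
      ∈ Set.Ioo (0 : ℝ) 1)
    -- the FedGDA-GT iterates
    (z : ℕ → EuclideanSpace ℝ (Fin p) × EuclideanSpace ℝ (Fin q))
    (w : ℕ → Fin m → ℕ → EuclideanSpace ℝ (Fin p) × EuclideanSpace ℝ (Fin q))
    (hw0 : ∀ t i, w t i 0 = z t)
    (hwx : ∀ t i k, (w t i (k + 1)).1 = (w t i k).1 -
        η • (gx i (w t i k) - gx i (z t) + (m : ℝ)⁻¹ • ∑ j, gx j (z t)))
    (hwy : ∀ t i k, (w t i (k + 1)).2 = (w t i k).2 +
        η • (gy i (w t i k) - gy i (z t) + (m : ℝ)⁻¹ • ∑ j, gy j (z t)))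
    (hzrec : ∀ t, z (t + 1) =
      (projX ((m : ℝ)⁻¹ • ∑ i, (w t i K).1), projY ((m : ℝ)⁻¹ • ∑ i, (w t i K).2))) :
    ∀ t, ‖(z t).1 - xs‖ ^ 2 + ‖(z t).2 - ys‖ ^ 2 ≤
      (1 - 2 * (η * μ * K - 2 * η ^ 2 * L ^ 2 * (K : ℝ) ^ 2 - η ^ 4 * L ^ 4 * (K : ℝ) ^ 4)) ^ t *
        (‖(z 0).1 - xs‖ ^ 2 + ‖(z 0).2 - ys‖ ^ 2) := by
  have hgap : 0 < η * μ * K - 2 * η ^ 2 * L ^ 2 * (K : ℝ) ^ 2 - η ^ 4 * L ^ 4 * (K : ℝ) ^ 4 := by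
    linarith [hρ.2]
  intro t
  induction t with
  | zero => simp
  | succ t ih =>
    have hround := fedGDAGT_round_sq_dist_le hm hη hμL hgap hmono hlip hstat1 hstat2 (hw0 t)
      (hwx t) (hwy t)
    obtain ⟨hpX, hminX⟩ := hprojX ((m : ℝ)⁻¹ • ∑ i, (w t i K).1)
    obtain ⟨hpY, hminY⟩ := hprojY ((m : ℝ)⁻¹ • ∑ i, (w t i K).2)
    have hproj : ‖(z (t + 1)).1 - xs‖ ^ 2 + ‖(z (t + 1)).2 - ys‖ ^ 2 ≤
        ‖(m : ℝ)⁻¹ • ∑ i, (w t i K).1 - xs‖ ^ 2 + ‖(m : ℝ)⁻¹ • ∑ i, (w t i K).2 - ys‖ ^ 2 := by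
      rw [hzrec t]
      exact add_le_add (hXconv.norm_sub_sq_le_of_forall_norm_sub_le hpX hminX hxsX)
        (hYconv.norm_sub_sq_le_of_forall_norm_sub_le hpY hminY hysY)
    rw [pow_succ' _ t, mul_assoc]
    exact (hproj.trans hround).trans (mul_le_mul_of_nonneg_left ih hρ.1.le)

/-- Linear convergence of FedGDA-GT: under `μ`-strong-convexity-strong-concavity and
`L`-smoothness of the local objectives (expressed via their gradient operators), with `K`
local steps, constant step size `η`, and projections onto the compact convex sets `X`, `Y`,
the iterates satisfy
`‖xᵗ - x*‖² + ‖yᵗ - y*‖² ≤ ρ(η)ᵗ (‖x⁰ - x*‖² + ‖y⁰ - y*‖²)` with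
`ρ(η) = 1 - 2(ημK - 2η²L²K² - η⁴L⁴K⁴) ∈ (0,1)`. -/
theorem stmt10 {p q : ℕ} (m K : ℕ) (hm : 0 < m) (hK : 0 < K)
    (μ L : ℝ) (hμ : 0 < μ) (hμL : μ ≤ L)
    (gx : Fin m → EuclideanSpace ℝ (Fin p) × EuclideanSpace ℝ (Fin q) → EuclideanSpace ℝ (Fin p))
    (gy : Fin m → EuclideanSpace ℝ (Fin p) × EuclideanSpace ℝ (Fin q) → EuclideanSpace ℝ (Fin q))
    -- μ-strong monotonicity of each (∇ₓ fᵢ, -∇_y fᵢ) (from μ-strong convexity-concavity)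
    (hmono : ∀ i (z z' : EuclideanSpace ℝ (Fin p) × EuclideanSpace ℝ (Fin q)),
      μ * (‖z.1 - z'.1‖ ^ 2 + ‖z.2 - z'.2‖ ^ 2) ≤
        (inner ℝ (gx i z - gx i z') (z.1 - z'.1) : ℝ) - (inner ℝ (gy i z - gy i z') (z.2 - z'.2) : ℝ))
    -- L-smoothness of each fᵢ
    (hlip : ∀ i (z z' : EuclideanSpace ℝ (Fin p) × EuclideanSpace ℝ (Fin q)),
      ‖gx i z - gx i z'‖ ^ 2 + ‖gy i z - gy i z'‖ ^ 2 ≤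
        L ^ 2 * (‖z.1 - z'.1‖ ^ 2 + ‖z.2 - z'.2‖ ^ 2))
    (X : Set (EuclideanSpace ℝ (Fin p))) (Y : Set (EuclideanSpace ℝ (Fin q)))
    (hXconv : Convex ℝ X) (hXcomp : IsCompact X)
    (hYconv : Convex ℝ Y) (hYcomp : IsCompact Y)
    (projX : EuclideanSpace ℝ (Fin p) → EuclideanSpace ℝ (Fin p))
    (projY : EuclideanSpace ℝ (Fin q) → EuclideanSpace ℝ (Fin q))
    (hprojX : ∀ w, projX w ∈ X ∧ ∀ u ∈ X, ‖projX w - w‖ ≤ ‖u - w‖)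
    (hprojY : ∀ w, projY w ∈ Y ∧ ∀ u ∈ Y, ‖projY w - w‖ ≤ ‖u - w‖)
    -- the minimax point of the average objective, lying in X × Y
    (xs : EuclideanSpace ℝ (Fin p)) (ys : EuclideanSpace ℝ (Fin q))
    (hxsX : xs ∈ X) (hysY : ys ∈ Y)
    (hstat1 : (m : ℝ)⁻¹ • ∑ i, gx i (xs, ys) = 0)
    (hstat2 : (m : ℝ)⁻¹ • ∑ i, gy i (xs, ys) = 0)
    (η : ℝ) (hη : 0 < η)
    (hρ : 1 - 2 * (η * μ * K - 2 * η ^ 2 * L ^ 2 * (K : ℝ) ^ 2 - η ^ 4 * L ^ 4 * (K : ℝ) ^ 4)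
      ∈ Set.Ioo (0 : ℝ) 1)
    -- the FedGDA-GT iterates
    (z : ℕ → EuclideanSpace ℝ (Fin p) × EuclideanSpace ℝ (Fin q))
    (hz0 : (z 0).1 ∈ X ∧ (z 0).2 ∈ Y)
    (w : ℕ → Fin m → ℕ → EuclideanSpace ℝ (Fin p) × EuclideanSpace ℝ (Fin q))
    (hw0 : ∀ t i, w t i 0 = z t)
    (hwx : ∀ t i k, (w t i (k + 1)).1 = (w t i k).1 -
        η • (gx i (w t i k) - gx i (z t) + (m : ℝ)⁻¹ • ∑ j, gx j (z t)))
    (hwy : ∀ t i k, (w t i (k + 1)).2 = (w t i k).2 +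
        η • (gy i (w t i k) - gy i (z t) + (m : ℝ)⁻¹ • ∑ j, gy j (z t)))
    (hzrec : ∀ t, z (t + 1) =
      (projX ((m : ℝ)⁻¹ • ∑ i, (w t i K).1), projY ((m : ℝ)⁻¹ • ∑ i, (w t i K).2))) :
    ∀ t, ‖(z t).1 - xs‖ ^ 2 + ‖(z t).2 - ys‖ ^ 2 ≤
      (1 - 2 * (η * μ * K - 2 * η ^ 2 * L ^ 2 * (K : ℝ) ^ 2 - η ^ 4 * L ^ 4 * (K : ℝ) ^ 4)) ^ t *
        (‖(z 0).1 - xs‖ ^ 2 + ‖(z 0).2 - ys‖ ^ 2) :=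
  stmt10_general m K hm μ L hμL gx gy hmono hlip X Y hXconv hYconv projX projY hprojX hprojY xs ys
    hxsX hysY hstat1 hstat2 η hη hρ z w hw0 hwx hwy hzrec
end

section
/- Under the FedGDA-GT local update z_{i,k+1} = z_{i,k} - η(F_i(z_{i,k}) - F_i(z^t) + F(z^t)) with z_{i,0} = z^t, if each F_i is μ-strongly monotone and L-Lipschitz and 0 < η < 2μ/L², then the client drift satisfies ‖z_{i,k} - z^t‖ ≤ ηK‖F(z^t)‖ ≤ ηKL‖z^t - z*‖ for all 1 ≤ k ≤ K, where z* satisfies F(z*) = 0. -/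
/-!
The step `u ↦ u - η Fᵢ u` is nonexpansive when `η L² ≤ 2μ`: expanding the square, strong
monotonicity removes `2ημ‖u - v‖²` and the Lipschitz bound adds back at most `η²L²‖u - v‖²`.
The gradient-tracking correction makes the local step from `z_{i,k}` equal to this nonexpansive
step, measured from `zᵗ`, shifted by `η F(zᵗ)`, so the drift grows by at most `η‖F(zᵗ)‖` per step.
Finally `F(zᵗ) = F(zᵗ) - F(z*)` is an average of differences of `L`-Lipschitz maps.
-/

open Finset

theorem norm_sub_smul_le_of_inner_ge {E : Type*} [NormedAddCommGroup E] [InnerProductSpace ℝ E]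
    {μ L η : ℝ} {x Δ : E} (hmono : μ * ‖x‖ ^ 2 ≤ inner ℝ Δ x) (hlip : ‖Δ‖ ≤ L * ‖x‖)
    (hη : 0 ≤ η) (hηL : η * L ^ 2 ≤ 2 * μ) :
    ‖x - η • Δ‖ ≤ ‖x‖ := by
  have hexpand : ‖x - η • Δ‖ ^ 2 = ‖x‖ ^ 2 - 2 * (η * inner ℝ Δ x) + η ^ 2 * ‖Δ‖ ^ 2 := by
    rw [norm_sub_sq_real, real_inner_smul_right, norm_smul, mul_pow, Real.norm_eq_abs, sq_abs,
      real_inner_comm]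
  have hΔsq : ‖Δ‖ ^ 2 ≤ L ^ 2 * ‖x‖ ^ 2 := by
    rw [← mul_pow]; exact pow_le_pow_left₀ (norm_nonneg Δ) hlip 2
  have hsq : ‖x - η • Δ‖ ^ 2 ≤ ‖x‖ ^ 2 := by
    rw [hexpand]
    nlinarith [mul_le_mul_of_nonneg_left hmono hη, mul_le_mul_of_nonneg_left hΔsq (sq_nonneg η),
      mul_le_mul_of_nonneg_left hηL (by positivity : 0 ≤ η * ‖x‖ ^ 2)]
  exact le_of_sq_le_sq hsq (norm_nonneg x)

theorem norm_sub_init_le_of_nonexpansive_step {E : Type*} [SeminormedAddCommGroup E]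
    [NormedSpace ℝ E] {G : E → E} {z c : E} {η : ℝ} (hη : 0 ≤ η)
    (hG : ∀ u, ‖(u - η • G u) - (z - η • G z)‖ ≤ ‖u - z‖)
    {w : ℕ → E} (hw0 : w 0 = z) (hw : ∀ k, w (k + 1) = w k - η • (G (w k) - G z + c)) (k : ℕ) :
    ‖w k - z‖ ≤ η * k * ‖c‖ := by
  induction k with
  | zero => simp [hw0]
  | succ k ih =>
    have hstep : w (k + 1) - z = ((w k - η • G (w k)) - (z - η • G z)) - η • c := by
      rw [hw k, smul_add, smul_sub]; abel
    calc ‖w (k + 1) - z‖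
        ≤ ‖(w k - η • G (w k)) - (z - η • G z)‖ + ‖η • c‖ := hstep ▸ norm_sub_le _ _
      _ ≤ η * k * ‖c‖ + η * ‖c‖ := by
        rw [norm_smul, Real.norm_of_nonneg hη]; gcongr; exact (hG _).trans ih
      _ = η * (k + 1 : ℕ) * ‖c‖ := by push_cast; ring

theorem norm_mean_le_of_lipschitz {ι E F : Type*} [Fintype ι] [Nonempty ι]
    [SeminormedAddCommGroup E] [SeminormedAddCommGroup F] [NormedSpace ℝ F]
    {G : ι → E → F} {L : ℝ} (hlip : ∀ j u v, ‖G j u - G j v‖ ≤ L * ‖u - v‖) {x y : E}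
    (hy : (Fintype.card ι : ℝ)⁻¹ • ∑ j, G j y = 0) :
    ‖(Fintype.card ι : ℝ)⁻¹ • ∑ j, G j x‖ ≤ L * ‖x - y‖ := by
  have hcard : (Fintype.card ι : ℝ) ≠ 0 := Nat.cast_ne_zero.mpr Fintype.card_ne_zero
  have hdiff : (Fintype.card ι : ℝ)⁻¹ • ∑ j, G j x
      = (Fintype.card ι : ℝ)⁻¹ • ∑ j, (G j x - G j y) := by
    rw [sum_sub_distrib, smul_sub, hy, sub_zero]
  calc ‖(Fintype.card ι : ℝ)⁻¹ • ∑ j, G j x‖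
      ≤ (Fintype.card ι : ℝ)⁻¹ * ∑ _j : ι, L * ‖x - y‖ := by
        rw [hdiff, norm_smul, norm_inv, RCLike.norm_natCast]
        gcongr
        exact (norm_sum_le _ _).trans (sum_le_sum fun j _ => hlip j x y)
    _ = L * ‖x - y‖ := by
        rw [sum_const, card_univ, nsmul_eq_mul, inv_mul_cancel_left₀ hcard]

theorem stmt11_general {d : ℕ} (m : ℕ) (μ L : ℝ)
    (Fi : Fin m → EuclideanSpace ℝ (Fin d) → EuclideanSpace ℝ (Fin d))
    (hmono : ∀ i u v, μ * ‖u - v‖ ^ 2 ≤ (inner ℝ (Fi i u - Fi i v) (u - v) : ℝ))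
    (hlip : ∀ i u v, ‖Fi i u - Fi i v‖ ≤ L * ‖u - v‖)
    (η : ℝ) (hη : 0 < η) (hη2 : η < 2 * μ / L ^ 2)
    (K : ℕ) (zt zs : EuclideanSpace ℝ (Fin d))
    (hzs : (m : ℝ)⁻¹ • ∑ j, Fi j zs = 0)
    (i : Fin m) (w : ℕ → EuclideanSpace ℝ (Fin d)) (hw0 : w 0 = zt)
    (hw : ∀ k, w (k + 1) = w k -
      η • (Fi i (w k) - Fi i zt + (m : ℝ)⁻¹ • ∑ j, Fi j zt)) :
    ∀ k, 1 ≤ k → k ≤ K →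
      ‖w k - zt‖ ≤ η * K * ‖(m : ℝ)⁻¹ • ∑ j, Fi j zt‖ ∧
        η * K * ‖(m : ℝ)⁻¹ • ∑ j, Fi j zt‖ ≤ η * K * L * ‖zt - zs‖ := by
  intro k _ hkK
  -- `L = 0` would turn the step-size bound into `η < 2μ / 0 = 0`.
  have hL2 : 0 < L ^ 2 := by
    refine lt_of_le_of_ne (sq_nonneg L) fun h => ?_
    rw [← h, div_zero] at hη2
    exact hη.not_gt hη2
  have hηL : η * L ^ 2 ≤ 2 * μ := ((lt_div_iff₀ hL2).mp hη2).le
  have hstep : ∀ u, ‖(u - η • Fi i u) - (zt - η • Fi i zt)‖ ≤ ‖u - zt‖ := fun u => by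
    rw [show (u - η • Fi i u) - (zt - η • Fi i zt) = (u - zt) - η • (Fi i u - Fi i zt) by
      rw [smul_sub]; abel]
    exact norm_sub_smul_le_of_inner_ge (hmono i u zt) (hlip i u zt) hη.le hηL
  have hdrift := norm_sub_init_le_of_nonexpansive_step hη.le hstep hw0 hw k
  have hmean : ‖(m : ℝ)⁻¹ • ∑ j, Fi j zt‖ ≤ L * ‖zt - zs‖ := by
    have : Nonempty (Fin m) := ⟨i⟩
    simpa using norm_mean_le_of_lipschitz (x := zt) hlip (by simpa using hzs)
  refine ⟨hdrift.trans ?_, ?_⟩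
  · gcongr
  · rw [mul_assoc (η * K)]; gcongr

/-- Client-drift bound for FedGDA-GT: with `μ`-strongly monotone, `L`-Lipschitz operators
`Fᵢ`, step size `0 < η < 2μ/L²`, and local recursion
`z_{i,k+1} = z_{i,k} - η (Fᵢ(z_{i,k}) - Fᵢ(zᵗ) + F(zᵗ))` started at `z_{i,0} = zᵗ`,
one has `‖z_{i,k} - zᵗ‖ ≤ ηK‖F(zᵗ)‖ ≤ ηKL‖zᵗ - z*‖` for `1 ≤ k ≤ K`, where `F(z*) = 0`. -/
theorem stmt11 {d : ℕ} (m : ℕ) (hm : 0 < m) (μ L : ℝ) (hμ : 0 < μ) (hL : 0 < L)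
    (Fi : Fin m → EuclideanSpace ℝ (Fin d) → EuclideanSpace ℝ (Fin d))
    (hmono : ∀ i u v, μ * ‖u - v‖ ^ 2 ≤ (inner ℝ (Fi i u - Fi i v) (u - v) : ℝ))
    (hlip : ∀ i u v, ‖Fi i u - Fi i v‖ ≤ L * ‖u - v‖)
    (η : ℝ) (hη : 0 < η) (hη2 : η < 2 * μ / L ^ 2)
    (K : ℕ) (zt zs : EuclideanSpace ℝ (Fin d))
    (hzs : (m : ℝ)⁻¹ • ∑ j, Fi j zs = 0)
    (i : Fin m) (w : ℕ → EuclideanSpace ℝ (Fin d)) (hw0 : w 0 = zt)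
    (hw : ∀ k, w (k + 1) = w k -
      η • (Fi i (w k) - Fi i zt + (m : ℝ)⁻¹ • ∑ j, Fi j zt)) :
    ∀ k, 1 ≤ k → k ≤ K →
      ‖w k - zt‖ ≤ η * K * ‖(m : ℝ)⁻¹ • ∑ j, Fi j zt‖ ∧
        η * K * ‖(m : ℝ)⁻¹ • ∑ j, Fi j zt‖ ≤ η * K * L * ‖zt - zs‖ :=
  stmt11_general m μ L Fi hmono hlip η hη hη2 K zt zs hzs i w hw0 hw
end

section
/- (Massart's lemma) Let V ⊆ R^n be a finite nonempty set with r = max_{v∈V} ‖v‖. Let σ_1,…,σ_n be independent Rademacher random variables (uniform on {-1,1}). Then E_σ[(1/n) sup_{v∈V} ∑_{j=1}^n σ_j v_j] ≤ r√(2 log|V|)/n. -/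
set_option maxHeartbeats 2000000

/-- Key bound: for all `l > 0`, the expected sup is at most `log|V|/l + l*r²/2`. -/
lemma massart_key (n : ℕ) (V : Finset (Fin n → ℝ)) (hV : V.Nonempty)
    (r : ℝ) (hr : ∀ v ∈ V, Real.sqrt (∑ j, v j ^ 2) ≤ r)
    (l : ℝ) (hl : 0 < l) :
    ((2 : ℝ) ^ n)⁻¹ * ∑ s : Fin n → Bool,
        V.sup' hV (fun v => ∑ j, (if s j then (1 : ℝ) else -1) * v j) ≤
      Real.log (V.card) / l + l * r ^ 2 / 2 := by
  set Z : (Fin n → Bool) → ℝ :=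
    fun s => V.sup' hV (fun v => ∑ j, (if s j then (1 : ℝ) else -1) * v j) with hZ
  have h2n : (0 : ℝ) < (2 : ℝ) ^ n := by positivity
  have hcard : (Finset.univ : Finset (Fin n → Bool)).card = 2 ^ n := by
    simp [Finset.card_univ]
  -- r² bounds ∑ v j ^ 2
  have hr2 : ∀ v ∈ V, (∑ j, v j ^ 2) ≤ r ^ 2 := by
    intro v hv
    have h0 : (0:ℝ) ≤ ∑ j, v j ^ 2 := by positivity
    have := hr v hv
    nlinarith [Real.sq_sqrt h0, Real.sqrt_nonneg (∑ j, v j ^ 2)]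
  -- Jensen step
  have hJensen : Real.exp (l * (((2 : ℝ) ^ n)⁻¹ * ∑ s : Fin n → Bool, Z s)) ≤
      ((2 : ℝ) ^ n)⁻¹ * ∑ s : Fin n → Bool, Real.exp (l * Z s) := by
    have hw : ∑ _s : Fin n → Bool, ((2:ℝ)^n)⁻¹ = 1 := by
      rw [Finset.sum_const, hcard, nsmul_eq_mul]
      push_cast
      field_simp
    have := convexOn_exp.map_sum_le (t := Finset.univ) (w := fun _ : Fin n → Bool => ((2:ℝ)^n)⁻¹)
      (p := fun s => l * Z s) (fun _ _ => by positivity) hw (fun _ _ => trivial)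
    simp only [smul_eq_mul] at this
    calc Real.exp (l * (((2 : ℝ) ^ n)⁻¹ * ∑ s : Fin n → Bool, Z s))
        = Real.exp (∑ s : Fin n → Bool, ((2:ℝ)^n)⁻¹ * (l * Z s)) := by
          congr 1
          rw [Finset.mul_sum, Finset.mul_sum]
          exact Finset.sum_congr rfl fun s _ => by ring
      _ ≤ ∑ s : Fin n → Bool, ((2:ℝ)^n)⁻¹ * Real.exp (l * Z s) := this
      _ = ((2 : ℝ) ^ n)⁻¹ * ∑ s : Fin n → Bool, Real.exp (l * Z s) := by
          rw [Finset.mul_sum]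
  -- exp of sup bounded by sum over V
  have hsup : ∀ s : Fin n → Bool, Real.exp (l * Z s) ≤
      ∑ v ∈ V, Real.exp (l * ∑ j, (if s j then (1 : ℝ) else -1) * v j) := by
    intro s
    obtain ⟨v, hv, hveq⟩ := Finset.exists_mem_eq_sup' hV
      (fun v => ∑ j, (if s j then (1 : ℝ) else -1) * v j)
    have h1 : Z s = ∑ j, (if s j then (1 : ℝ) else -1) * v j := hveq
    rw [h1]
    apply Finset.single_le_sum (fun w _ => (Real.exp_pos _).le) hv
  -- MGF factorization : for each v, average of exp equals product of cosh
  have hmgf : ∀ v ∈ V, ((2 : ℝ) ^ n)⁻¹ *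
      ∑ s : Fin n → Bool, Real.exp (l * ∑ j, (if s j then (1 : ℝ) else -1) * v j)
      ≤ Real.exp (l ^ 2 * r ^ 2 / 2) := by
    intro v hv
    have hfact : ∑ s : Fin n → Bool, Real.exp (l * ∑ j, (if s j then (1 : ℝ) else -1) * v j)
        = ∏ j : Fin n, (∑ b : Bool, Real.exp (l * ((if b then (1:ℝ) else -1) * v j))) := by
      have := Finset.prod_univ_sum (t := fun _ : Fin n => (Finset.univ : Finset Bool))
        (f := fun j b => Real.exp (l * ((if b then (1:ℝ) else -1) * v j)))
      rw [this, Fintype.piFinset_univ]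
      apply Finset.sum_congr rfl
      intro s _
      rw [← Real.exp_sum, Finset.mul_sum]
    rw [hfact]
    have hprod : ∏ j : Fin n, (∑ b : Bool, Real.exp (l * ((if b then (1:ℝ) else -1) * v j)))
        = (2:ℝ)^n * ∏ j : Fin n, Real.cosh (l * v j) := by
      have : ∏ j : Fin n, (∑ b : Bool, Real.exp (l * ((if b then (1:ℝ) else -1) * v j)))
          = ∏ j : Fin n, (2 * Real.cosh (l * v j)) := by
        apply Finset.prod_congr rfl
        intro j _
        rw [Fintype.sum_bool, if_pos rfl, if_neg Bool.false_ne_true, Real.cosh_eq,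
          one_mul, neg_one_mul, mul_neg]
        ring
      rw [this, Finset.prod_mul_distrib, Finset.prod_const]
      simp
    rw [hprod, ← mul_assoc, inv_mul_cancel₀ h2n.ne', one_mul]
    calc ∏ j : Fin n, Real.cosh (l * v j)
        ≤ ∏ j : Fin n, Real.exp ((l * v j) ^ 2 / 2) :=
          Finset.prod_le_prod (fun j _ => (Real.cosh_pos _).le)
            (fun j _ => Real.cosh_le_exp_half_sq _)
      _ = Real.exp (∑ j, (l * v j) ^ 2 / 2) := by rw [Real.exp_sum]
      _ ≤ Real.exp (l ^ 2 * r ^ 2 / 2) := by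
          apply Real.exp_le_exp.2
          have : ∑ j, (l * v j) ^ 2 / 2 = l ^ 2 * (∑ j, v j ^ 2) / 2 := by
            rw [Finset.mul_sum, Finset.sum_div]
            apply Finset.sum_congr rfl; intro j _; ring
          rw [this]
          have h2 := hr2 v hv
          nlinarith [sq_nonneg l]
  -- combine
  have hmain : Real.exp (l * (((2 : ℝ) ^ n)⁻¹ * ∑ s : Fin n → Bool, Z s)) ≤
      (V.card : ℝ) * Real.exp (l ^ 2 * r ^ 2 / 2) := by
    calc Real.exp (l * (((2 : ℝ) ^ n)⁻¹ * ∑ s : Fin n → Bool, Z s))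
        ≤ ((2 : ℝ) ^ n)⁻¹ * ∑ s : Fin n → Bool, Real.exp (l * Z s) := hJensen
      _ ≤ ((2 : ℝ) ^ n)⁻¹ * ∑ s : Fin n → Bool,
            ∑ v ∈ V, Real.exp (l * ∑ j, (if s j then (1 : ℝ) else -1) * v j) := by
          apply mul_le_mul_of_nonneg_left _ (by positivity)
          exact Finset.sum_le_sum fun s _ => hsup s
      _ = ∑ v ∈ V, ((2 : ℝ) ^ n)⁻¹ *
            ∑ s : Fin n → Bool, Real.exp (l * ∑ j, (if s j then (1 : ℝ) else -1) * v j) := by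
          rw [Finset.sum_comm, Finset.mul_sum]
      _ ≤ ∑ _v ∈ V, Real.exp (l ^ 2 * r ^ 2 / 2) := Finset.sum_le_sum hmgf
      _ = (V.card : ℝ) * Real.exp (l ^ 2 * r ^ 2 / 2) := by
          rw [Finset.sum_const, nsmul_eq_mul]
  have hcardpos : (0:ℝ) < V.card := by
    exact_mod_cast Finset.card_pos.2 hV
  have hlog : l * (((2 : ℝ) ^ n)⁻¹ * ∑ s : Fin n → Bool, Z s) ≤
      Real.log (V.card) + l ^ 2 * r ^ 2 / 2 := by
    have : Real.exp (l * (((2 : ℝ) ^ n)⁻¹ * ∑ s : Fin n → Bool, Z s)) ≤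
        Real.exp (Real.log (V.card) + l ^ 2 * r ^ 2 / 2) := by
      rw [Real.exp_add, Real.exp_log hcardpos]
      exact hmain
    exact Real.exp_le_exp.1 this
  rw [mul_comm] at hlog
  have h1 : (((2 : ℝ) ^ n)⁻¹ * ∑ s : Fin n → Bool, Z s) ≤
      (Real.log (V.card) + l ^ 2 * r ^ 2 / 2) / l := by
    rw [le_div_iff₀ hl]
    exact hlog
  calc ((2 : ℝ) ^ n)⁻¹ * ∑ s : Fin n → Bool, Z s
      ≤ (Real.log (V.card) + l ^ 2 * r ^ 2 / 2) / l := h1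
    _ = Real.log (V.card) / l + l * r ^ 2 / 2 := by
        field_simp

/-- Massart's lemma: for a finite nonempty `V ⊆ ℝⁿ` with `‖v‖ ≤ r` for all `v ∈ V`, and
independent Rademacher variables `σ₁, …, σₙ` (expectation realized as the uniform average
over all sign patterns), `E_σ[(1/n) sup_{v ∈ V} ∑ⱼ σⱼ vⱼ] ≤ r √(2 log |V|) / n`. -/
theorem stmt15 (n : ℕ) (hn : 0 < n) (V : Finset (Fin n → ℝ)) (hV : V.Nonempty)
    (r : ℝ) (hr : ∀ v ∈ V, Real.sqrt (∑ j, v j ^ 2) ≤ r) :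
    ((2 : ℝ) ^ n)⁻¹ * ∑ s : Fin n → Bool,
        (1 / (n : ℝ)) * V.sup' hV (fun v => ∑ j, (if s j then (1 : ℝ) else -1) * v j) ≤
      r * Real.sqrt (2 * Real.log (V.card)) / n := by
  have hnR : (0:ℝ) < n := by exact_mod_cast hn
  set S : ℝ := ((2 : ℝ) ^ n)⁻¹ * ∑ s : Fin n → Bool,
    V.sup' hV (fun v => ∑ j, (if s j then (1 : ℝ) else -1) * v j) with hS
  have hkey := massart_key n V hV r hr
  simp only [← hS] at hkey
  have hLHS : ((2 : ℝ) ^ n)⁻¹ * ∑ s : Fin n → Bool,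
      (1 / (n : ℝ)) * V.sup' hV (fun v => ∑ j, (if s j then (1 : ℝ) else -1) * v j)
      = (1 / (n:ℝ)) * S := by
    rw [hS, ← Finset.mul_sum]; ring
  rw [hLHS]
  have hgoal : S ≤ r * Real.sqrt (2 * Real.log (V.card)) := by
    have hrnn : (0:ℝ) ≤ r := by
      obtain ⟨v, hv⟩ := hV
      exact le_trans (Real.sqrt_nonneg _) (hr v hv)
    set L : ℝ := Real.log (V.card) with hLdef
    have hLnn : 0 ≤ L := by
      apply Real.log_nonneg
      exact_mod_cast Finset.card_pos.2 hV
    rcases eq_or_lt_of_le hLnn with hL0 | hLpos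
    · -- L = 0 : need S ≤ 0
      have hS0 : S ≤ 0 := by
        apply le_of_forall_pos_le_add
        intro ε hε
        rcases eq_or_lt_of_le hrnn with hr0 | hrpos
        · have := hkey 1 one_pos
          rw [← hL0, ← hr0] at this
          norm_num at this
          linarith
        · have hl : (0:ℝ) < 2 * ε / r ^ 2 := by positivity
          have := hkey (2 * ε / r ^ 2) hl
          rw [← hL0] at this
          rw [zero_div, zero_add] at this
          have heq : (2 * ε / r ^ 2) * r ^ 2 / 2 = ε := by
            field_simp
          rw [heq] at this
          linarith
      have : r * Real.sqrt (2 * L) ≥ 0 := by positivity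
      linarith
    · rcases eq_or_lt_of_le hrnn with hr0 | hrpos
      · -- r = 0 : need S ≤ 0
        have hS0 : S ≤ 0 := by
          apply le_of_forall_pos_le_add
          intro ε hε
          have hl : (0:ℝ) < L / ε := by positivity
          have := hkey (L / ε) hl
          rw [← hr0] at this
          have heq : L / (L / ε) = ε := by
            field_simp
          rw [heq] at this
          simpa using this.trans (by nlinarith)
        have : r * Real.sqrt (2 * L) ≥ 0 := by positivity
        linarith
      · -- main case
        set t : ℝ := Real.sqrt (2 * L) with ht
        have htpos : 0 < t := Real.sqrt_pos.2 (by linarith)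
        have ht2 : t ^ 2 = 2 * L := Real.sq_sqrt (by linarith)
        have hl : (0:ℝ) < t / r := by positivity
        have := hkey (t / r) hl
        have heq : L / (t / r) + (t / r) * r ^ 2 / 2 = r * t := by
          field_simp
          nlinarith [ht2]
        rw [heq] at this
        exact this
  calc (1 / (n:ℝ)) * S ≤ (1 / (n:ℝ)) * (r * Real.sqrt (2 * Real.log (V.card))) := by
        apply mul_le_mul_of_nonneg_left hgoal (by positivity)
    _ = r * Real.sqrt (2 * Real.log (V.card)) / n := by ring
end
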